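/- The maps $\phi_n:M\to M_n$ defined by $\phi_n=(r_n|_{M_n})^{-1}\circ T_{s_n}\circ r_n$ are well-defined retractions onto $M_n$ satisfying $\phi_n\circ\phi_m=\phi_{\min(m,n)}$ for all $m,n\in\mathbb N$, and every $\phi_n$ is $(3\lambda+2)$-Lipschitz. -/

import Mathlib

/-!
The restriction `r_n` maps `M_n` bijectively onto the integer points `f(s_n B_{ℓ∞(Γ_n)})`:
each point added at stage `n` is recovered from its restriction, and a point of the ball that
is not yet the restriction of an element of `M_{n-1}` is added at stage `n`. So `φ_n` is
well defined. Values of elements of `M_n` on `Γ_n` are bounded by `s_n` (off `Γ_k`, the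
extension `i_k` costs a factor `λ` and `λ s_k = s_{k+1}`), so `T_{s_n}` fixes `r_n(M_n)` and
`φ_n` is a retraction; `T_{s_n} ∘ T_{s_m} = T_{s_n}` for `n ≤ m` gives `φ_n ∘ φ_m = φ_n`.

For the Lipschitz bound, every `w ∈ M_n` is within `1 + λ` of `i_n(r_n w)` (one rounding
before and one after an extension). Hence for `u, v ∈ M_n`,
`‖u - v‖ ≤ 2 + 2λ + λ ‖r_n u - r_n v‖`, and since distinct integer-valued functions are
at distance at least `1`, the constant is absorbed: `‖u - v‖ ≤ (3λ + 2) ‖r_n u - r_n v‖`.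
Finally `r_n` and `T_{s_n}` are `1`-Lipschitz.
-/

open Set

noncomputable section

variable {Γ : Type*} [TopologicalSpace Γ] [DiscreteTopology Γ]

/-- `ℓ∞(Γ)`: the Banach space of bounded real functions on `Γ`
(carrying the discrete topology, so that boundedness is the only constraint). -/
abbrev Linf (Γ : Type*) [TopologicalSpace Γ] [DiscreteTopology Γ] : Type _ :=
  BoundedContinuousFunction Γ ℝ

/-- The entire part of a real number, toward `0`: `[r] = sign(r)⌊|r|⌋`. -/
def ent (r : ℝ) : ℝ := Real.sign r * ⌊|r|⌋

lemma abs_ent_le (r : ℝ) : |ent r| ≤ |r| := by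
  have hsign : |Real.sign r| ≤ 1 := by
    rcases lt_trichotomy r 0 with h | h | h
    · rw [Real.sign_of_neg h]; norm_num
    · rw [h, Real.sign_zero]; norm_num
    · rw [Real.sign_of_pos h]; norm_num
  have hfl : |(⌊|r|⌋ : ℝ)| ≤ |r| := by
    rw [abs_of_nonneg (by exact_mod_cast Int.floor_nonneg.mpr (abs_nonneg r))]
    exact Int.floor_le _
  calc |ent r| = |Real.sign r| * |(⌊|r|⌋ : ℝ)| := abs_mul _ _
    _ ≤ 1 * |r| := mul_le_mul hsign hfl (abs_nonneg _) zero_le_one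
    _ = |r| := one_mul _

/-- The coordinatewise quantization `f : ℓ∞(S) → ℓ∞(S)`, `f(x)(γ) = [x(γ)]`. -/
def quant (x : Linf Γ) : Linf Γ :=
  BoundedContinuousFunction.ofNormedAddCommGroup (fun γ => ent (x γ))
    continuous_of_discreteTopology ‖x‖ (fun γ => by
      rw [Real.norm_eq_abs]
      exact (abs_ent_le (x γ)).trans (by simpa using x.norm_coe_le_norm γ))

/-- Scalar truncation at level `s`. -/
def truncFun (s t : ℝ) : ℝ := if |t| ≤ s then t else s * t / |t|

lemma abs_truncFun_le (s t : ℝ) : |truncFun s t| ≤ max |s| |t| := by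
  unfold truncFun
  split_ifs with h
  · exact le_max_right _ _
  · by_cases ht : t = 0
    · simp [ht]
    · have hst : abs (s * t / |t|) = |s| := by
        rw [abs_div, abs_mul, abs_abs, mul_div_assoc, div_self (abs_ne_zero.mpr ht), mul_one]
      rw [hst]; exact le_max_left _ _

/-- The truncation of radius `s`: `T_s(x)(γ) = x(γ)` if `|x(γ)| ≤ s`,
and `= s·x(γ)/|x(γ)|` otherwise. -/
def trunc (s : ℝ) (x : Linf Γ) : Linf Γ :=
  BoundedContinuousFunction.ofNormedAddCommGroup (fun γ => truncFun s (x γ))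
    continuous_of_discreteTopology (max |s| ‖x‖) (fun γ => by
      rw [Real.norm_eq_abs]
      exact (abs_truncFun_le s (x γ)).trans
        (max_le_max le_rfl (by simpa using x.norm_coe_le_norm γ)))

/-- The restriction operator `r_S : ℓ∞(Γ) → ℓ∞(S)`, where `ℓ∞(S)` is identified
isometrically with the subspace of `ℓ∞(Γ)` of functions vanishing off `S`. -/
def restr (S : Set Γ) (x : Linf Γ) : Linf Γ :=
  BoundedContinuousFunction.ofNormedAddCommGroup (S.indicator x)
    continuous_of_discreteTopology ‖x‖ (fun γ => by
      rw [Real.norm_eq_abs]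
      by_cases h : γ ∈ S
      · rw [Set.indicator_of_mem h]
        simpa using x.norm_coe_le_norm γ
      · rw [Set.indicator_of_notMem h]
        simp)

/-- The ball `s·B_{ℓ∞(S)}`, viewed inside `ℓ∞(Γ)`: functions supported on `S`
of norm at most `s`. -/
def suppBall (S : Set Γ) (s : ℝ) : Set (Linf Γ) :=
  {x | (∀ γ ∉ S, x γ = 0) ∧ ‖x‖ ≤ s}

/-- `chain T a b = T (a+1) ∘ ⋯ ∘ T b` (the identity if `b ≤ a`). -/
def chain {α : Type*} (T : ℕ → α → α) (a b : ℕ) : α → α :=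
  Nat.rec id (fun k ih => ih ∘ T (a + k + 1)) (b - a)

/-- Bourgain–Delbaen data on `Γ`: a strictly increasing sequence of nonempty finite
sets `Γs n` (for `n ≥ 1`) with union `Γ`, together with compatible bounded linear
extension operators `i n : ℓ∞(Γ_n) → ℓ∞(Γ)` (realized as operators on `ℓ∞(Γ)`
factoring through the restriction `restr (Γs n)`), with norms bounded by the
positive integer `lam`. -/
structure BD (Γ : Type*) [TopologicalSpace Γ] [DiscreteTopology Γ] where
  Γs : ℕ → Set Γ
  lam : ℕ
  i : ℕ → Linf Γ →L[ℝ] Linf Γ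
  one_le_lam : 1 ≤ lam
  finite : ∀ n, 1 ≤ n → (Γs n).Finite
  nonempty : ∀ n, 1 ≤ n → (Γs n).Nonempty
  ssubset : ∀ n, 1 ≤ n → Γs n ⊂ Γs (n + 1)
  iUnion_eq : ⋃ n ∈ {k : ℕ | 1 ≤ k}, Γs n = Set.univ
  extension : ∀ n, 1 ≤ n → ∀ x : Linf Γ, ∀ γ ∈ Γs n, i n x γ = x γ
  factor : ∀ n, 1 ≤ n → ∀ x : Linf Γ, i n (restr (Γs n) x) = i n x
  compatible : ∀ n m, 1 ≤ n → n < m → ∀ x : Linf Γ, i m (restr (Γs m) (i n x)) = i n x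
  norm_i_le : ∀ n, 1 ≤ n → ‖i n‖ ≤ (lam : ℝ)

namespace BD

/-- `s n = λ^n`. -/
def s (B : BD Γ) (n : ℕ) : ℝ := (B.lam : ℝ) ^ n

/-- The sets `M_n` (with `M_0 = ∅`):
`M_n = M_{n-1} ∪ (f ∘ i_n)(f(s_n B_{ℓ∞(Γ_n)}) \ r_n(M_{n-1}))`. -/
def M (B : BD Γ) : ℕ → Set (Linf Γ)
  | 0 => ∅
  | n + 1 =>
      M B n ∪
        (fun z => quant (B.i (n + 1) z)) ''
          (quant '' suppBall (B.Γs (n + 1)) (B.s (n + 1)) \ restr (B.Γs (n + 1)) '' M B n)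

/-- `M = ⋃ n, M_n`. -/
def Mtot (B : BD Γ) : Set (Linf Γ) := ⋃ n, B.M n

/-- `C_n = (f ∘ i_{n+1} ∘ f ∘ T_{s_{n+1}} ∘ r_{n+1} ∘ i_n)
(f(s_{n+1}B_{ℓ∞(Γ_n)}) \ f(s_n B_{ℓ∞(Γ_n)}))`. -/
def C (B : BD Γ) (n : ℕ) : Set (Linf Γ) :=
  (fun z => quant (B.i (n + 1) (quant (trunc (B.s (n + 1)) (restr (B.Γs (n + 1)) (B.i n z)))))) ''
    (quant '' suppBall (B.Γs n) (B.s (n + 1)) \ quant '' suppBall (B.Γs n) (B.s n))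

/-- `D_n = M_n ∪ C_n`. -/
def D (B : BD Γ) (n : ℕ) : Set (Linf Γ) := B.M n ∪ B.C n

end BD

lemma ent_intCast (k : ℤ) : ent k = k := by
  rcases lt_trichotomy k 0 with h | rfl | h
  · have h' : (k : ℝ) < 0 := by exact_mod_cast h
    rw [ent, Real.sign_of_neg h', abs_of_neg h', ← Int.cast_neg, Int.floor_intCast]
    push_cast; ring
  · simp [ent]
  · have h' : (0 : ℝ) < k := by exact_mod_cast h
    rw [ent, Real.sign_of_pos h', abs_of_pos h', Int.floor_intCast, one_mul]

lemma exists_intCast_eq_ent (r : ℝ) : ∃ k : ℤ, (k : ℝ) = ent r := by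
  rcases Real.sign_apply_eq r with h | h | h <;> simp only [ent, h]
  · exact ⟨-⌊|r|⌋, by push_cast; ring⟩
  · exact ⟨0, by simp⟩
  · exact ⟨⌊|r|⌋, by ring⟩

lemma abs_ent_sub_le (r : ℝ) : |ent r - r| ≤ 1 := by
  have hfract : abs ((⌊|r|⌋ : ℝ) - |r|) ≤ 1 := by
    rw [abs_sub_comm, Int.self_sub_floor, abs_of_nonneg (Int.fract_nonneg _)]
    exact (Int.fract_lt_one _).le
  rcases lt_trichotomy r 0 with h | rfl | h
  · rw [abs_of_neg h] at hfract
    rw [ent, Real.sign_of_neg h, abs_of_neg h, ← abs_neg]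
    convert hfract using 2
    ring
  · simp [ent]
  · rw [abs_of_pos h] at hfract
    rwa [ent, Real.sign_of_pos h, abs_of_pos h, one_mul]

lemma truncFun_eq_max_min {s : ℝ} (hs : 0 ≤ s) (t : ℝ) :
    truncFun s t = max (-s) (min s t) := by
  unfold truncFun
  split_ifs with h
  · rw [abs_le] at h
    rw [min_eq_right h.2, max_eq_right h.1]
  · rcases lt_or_gt_of_ne (show t ≠ 0 by rintro rfl; simp_all) with ht | ht
    · rw [abs_of_neg ht] at h ⊢
      rw [mul_div_assoc, div_neg, div_self ht.ne, min_eq_right (by linarith),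
        max_eq_left (by linarith)]
      ring
    · rw [abs_of_pos ht] at h ⊢
      rw [mul_div_assoc, div_self ht.ne', mul_one, min_eq_left (not_le.1 h).le,
        max_eq_right (by linarith)]

lemma abs_truncFun_sub_truncFun_le {s : ℝ} (hs : 0 ≤ s) (a b : ℝ) :
    |truncFun s a - truncFun s b| ≤ |a - b| := by
  rw [truncFun_eq_max_min hs, truncFun_eq_max_min hs, max_comm (-s), max_comm (-s),
    min_comm s, min_comm s]
  refine (abs_max_sub_max_le_abs _ _ _).trans ?_
  simpa using abs_min_sub_min_le_max a s b s

lemma truncFun_truncFun {a b : ℝ} (ha : 0 ≤ a) (hab : a ≤ b) (t : ℝ) :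
    truncFun a (truncFun b t) = truncFun a t := by
  simp only [truncFun_eq_max_min ha, truncFun_eq_max_min (ha.trans hab), max_def, min_def]
  split_ifs <;> linarith

lemma truncFun_of_abs_le {s t : ℝ} (h : |t| ≤ s) : truncFun s t = t := if_pos h

lemma truncFun_zero {s : ℝ} (hs : 0 ≤ s) : truncFun s 0 = 0 := by
  simp [truncFun, hs]

lemma abs_truncFun_le_of_nonneg {s : ℝ} (hs : 0 ≤ s) (t : ℝ) : |truncFun s t| ≤ s := by
  rw [truncFun_eq_max_min hs, abs_le]
  exact ⟨le_max_left _ _, max_le (by linarith) (min_le_left _ _)⟩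

lemma exists_intCast_eq_truncFun {j k : ℤ} (hj : 0 ≤ (j : ℝ)) :
    ∃ l : ℤ, (l : ℝ) = truncFun j k :=
  ⟨max (-j) (min j k), by rw [truncFun_eq_max_min hj]; push_cast; rfl⟩

def IntValued (x : Linf Γ) : Prop := ∀ γ, ∃ k : ℤ, (k : ℝ) = x γ

@[simp] lemma quant_apply (x : Linf Γ) (γ : Γ) : quant x γ = ent (x γ) := rfl

@[simp] lemma trunc_apply (s : ℝ) (x : Linf Γ) (γ : Γ) : trunc s x γ = truncFun s (x γ) :=
  rfl

@[simp] lemma restr_apply (S : Set Γ) (x : Linf Γ) (γ : Γ) : restr S x γ = S.indicator x γ :=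
  rfl

lemma abs_apply_le_norm (x : Linf Γ) (γ : Γ) : |x γ| ≤ ‖x‖ := by
  simpa using x.norm_coe_le_norm γ

lemma norm_le_of_forall_abs_le {x : Linf Γ} {C : ℝ} (hC : 0 ≤ C) (h : ∀ γ, |x γ| ≤ C) :
    ‖x‖ ≤ C :=
  (BoundedContinuousFunction.norm_le hC).2 fun γ => by simpa using h γ

lemma intValued_quant (x : Linf Γ) : IntValued (quant x) :=
  fun γ => exists_intCast_eq_ent (x γ)

lemma IntValued.quant_eq {x : Linf Γ} (hx : IntValued x) : quant x = x := by
  ext γ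
  obtain ⟨k, hk⟩ := hx γ
  simp [← hk, ent_intCast]

lemma IntValued.restr {x : Linf Γ} (hx : IntValued x) (S : Set Γ) : IntValued (restr S x) := by
  intro γ
  by_cases hγ : γ ∈ S
  · simpa [hγ] using hx γ
  · exact ⟨0, by simp [hγ]⟩

lemma IntValued.trunc {x : Linf Γ} (hx : IntValued x) (j : ℕ) : IntValued (trunc j x) := by
  intro γ
  obtain ⟨k, hk⟩ := hx γ
  simpa [← hk] using exists_intCast_eq_truncFun (j := j) (k := k) (by positivity)

lemma one_le_norm_sub_of_intValued {x y : Linf Γ} (hx : IntValued x) (hy : IntValued y)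
    (hxy : x ≠ y) : 1 ≤ ‖x - y‖ := by
  obtain ⟨γ, hγ⟩ : ∃ γ, x γ ≠ y γ := by
    by_contra! h
    exact hxy (BoundedContinuousFunction.ext h)
  obtain ⟨j, hj⟩ := hx γ
  obtain ⟨k, hk⟩ := hy γ
  have hjk : j - k ≠ 0 := sub_ne_zero.2 fun h => hγ (by rw [← hj, ← hk, h])
  calc (1 : ℝ) ≤ ((|j - k| : ℤ) : ℝ) := by exact_mod_cast Int.one_le_abs hjk
    _ = |x γ - y γ| := by push_cast [hj, hk]; rfl
    _ ≤ ‖x - y‖ := abs_apply_le_norm (x - y) γ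

lemma norm_quant_sub_le (x : Linf Γ) : ‖quant x - x‖ ≤ 1 :=
  norm_le_of_forall_abs_le zero_le_one fun γ => by simpa using abs_ent_sub_le (x γ)

lemma norm_quant_le (x : Linf Γ) : ‖quant x‖ ≤ ‖x‖ :=
  norm_le_of_forall_abs_le (norm_nonneg x) fun γ =>
    (abs_ent_le (x γ)).trans (abs_apply_le_norm x γ)

lemma mem_quant_image_suppBall {S : Set Γ} {s : ℝ} {z : Linf Γ} :
    z ∈ quant '' suppBall S s ↔ IntValued z ∧ z ∈ suppBall S s := by
  constructor
  · rintro ⟨x, ⟨hsupp, hnorm⟩, rfl⟩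
    refine ⟨intValued_quant x, fun γ hγ => ?_, (norm_quant_le x).trans hnorm⟩
    simp [hsupp γ hγ, ent]
  · rintro ⟨hz, hball⟩
    exact ⟨z, hball, hz.quant_eq⟩

lemma restr_restr_of_subset {S T : Set Γ} (h : S ⊆ T) (x : Linf Γ) :
    restr S (restr T x) = restr S x := by
  ext γ
  by_cases hγ : γ ∈ S
  · simp [hγ, h hγ]
  · simp [hγ]

lemma restr_quant (S : Set Γ) (x : Linf Γ) : restr S (quant x) = quant (restr S x) := by
  ext γ
  by_cases hγ : γ ∈ S <;> simp [hγ, ent]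

lemma restr_trunc {s : ℝ} (hs : 0 ≤ s) (S : Set Γ) (x : Linf Γ) :
    restr S (trunc s x) = trunc s (restr S x) := by
  ext γ
  by_cases hγ : γ ∈ S <;> simp [hγ, truncFun_zero hs]

lemma trunc_trunc {a b : ℝ} (ha : 0 ≤ a) (hab : a ≤ b) (x : Linf Γ) :
    trunc a (trunc b x) = trunc a x := by
  ext γ
  simp [truncFun_truncFun ha hab]

lemma norm_restr_sub_restr_le (S : Set Γ) (x y : Linf Γ) :
    ‖restr S x - restr S y‖ ≤ ‖x - y‖ :=
  norm_le_of_forall_abs_le (norm_nonneg _) fun γ => by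
    by_cases hγ : γ ∈ S
    · simpa [hγ] using abs_apply_le_norm (x - y) γ
    · simp [hγ]

lemma norm_trunc_sub_trunc_le {s : ℝ} (hs : 0 ≤ s) (x y : Linf Γ) :
    ‖trunc s x - trunc s y‖ ≤ ‖x - y‖ :=
  norm_le_of_forall_abs_le (norm_nonneg _) fun γ =>
    (abs_truncFun_sub_truncFun_le hs (x γ) (y γ)).trans (abs_apply_le_norm (x - y) γ)

lemma norm_trunc_le {s : ℝ} (hs : 0 ≤ s) (x : Linf Γ) : ‖trunc s x‖ ≤ s :=
  norm_le_of_forall_abs_le hs fun γ => abs_truncFun_le_of_nonneg hs (x γ)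

namespace BD

variable (B : BD Γ)

lemma one_le_lam_real : (1 : ℝ) ≤ B.lam := by exact_mod_cast B.one_le_lam

lemma s_nonneg (n : ℕ) : 0 ≤ B.s n := pow_nonneg B.lam.cast_nonneg n

lemma s_mono {m n : ℕ} (h : m ≤ n) : B.s m ≤ B.s n := pow_le_pow_right₀ B.one_le_lam_real h

lemma s_succ (n : ℕ) : B.s (n + 1) = B.lam * B.s n := pow_succ' _ n

lemma s_eq_natCast (n : ℕ) : B.s n = ((B.lam ^ n : ℕ) : ℝ) := by simp [s]

lemma Γs_mono {m n : ℕ} (hm : 1 ≤ m) (h : m ≤ n) : B.Γs m ⊆ B.Γs n := by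
  induction n, h using Nat.le_induction with
  | base => exact subset_rfl
  | succ k hk ih => exact ih.trans (B.ssubset k (hm.trans hk)).subset

lemma M_mono {m n : ℕ} (h : m ≤ n) : B.M m ⊆ B.M n := by
  induction n, h using Nat.le_induction with
  | base => exact subset_rfl
  | succ k _ ih => exact ih.trans subset_union_left

lemma mem_Mtot {n : ℕ} {x : Linf Γ} (hx : x ∈ B.M n) : x ∈ B.Mtot := mem_iUnion_of_mem n hx

lemma restr_quant_i {n : ℕ} (hn : 1 ≤ n) {s : ℝ} {z : Linf Γ}
    (hz : z ∈ quant '' suppBall (B.Γs n) s) : restr (B.Γs n) (quant (B.i n z)) = z := by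
  obtain ⟨hint, hsupp, -⟩ := mem_quant_image_suppBall.1 hz
  ext γ
  by_cases hγ : γ ∈ B.Γs n
  · obtain ⟨k, hk⟩ := hint γ
    simp [hγ, B.extension n hn z γ hγ, ← hk, ent_intCast]
  · simp [hγ, hsupp γ hγ]

lemma exists_eq_quant_i_of_mem_M {n : ℕ} {w : Linf Γ} (hw : w ∈ B.M n) :
    ∃ k, 1 ≤ k ∧ k ≤ n ∧
      ∃ z ∈ quant '' suppBall (B.Γs k) (B.s k), w = quant (B.i k z) := by
  induction n with
  | zero => simp [M] at hw
  | succ n ih =>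
    rcases hw with hw | ⟨z, ⟨hz, -⟩, rfl⟩
    · obtain ⟨k, hk, hkn, hz⟩ := ih hw
      exact ⟨k, hk, hkn.trans n.le_succ, hz⟩
    · exact ⟨n + 1, n.succ_pos, le_rfl, z, hz, rfl⟩

lemma intValued_of_mem_Mtot {x : Linf Γ} (hx : x ∈ B.Mtot) : IntValued x := by
  obtain ⟨n, hn⟩ := mem_iUnion.1 hx
  obtain ⟨k, -, -, z, -, rfl⟩ := B.exists_eq_quant_i_of_mem_M hn
  exact intValued_quant _

lemma abs_apply_le_s_of_mem_M {n : ℕ} {w : Linf Γ} (hw : w ∈ B.M n) {γ : Γ}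
    (hγ : γ ∈ B.Γs n) : |w γ| ≤ B.s n := by
  obtain ⟨k, hk, hkn, z, hz, rfl⟩ := B.exists_eq_quant_i_of_mem_M hw
  have hzk : ‖z‖ ≤ B.s k := (mem_quant_image_suppBall.1 hz).2.2
  refine (abs_ent_le _).trans ?_
  by_cases hγk : γ ∈ B.Γs k
  · rw [B.extension k hk z γ hγk]
    exact (abs_apply_le_norm z γ).trans (hzk.trans (B.s_mono hkn))
  · have hkn' : k + 1 ≤ n := lt_of_le_of_ne hkn (by rintro rfl; exact hγk hγ)
    calc |B.i k z γ| ≤ ‖B.i k‖ * ‖z‖ :=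
          (abs_apply_le_norm _ γ).trans ((B.i k).le_opNorm z)
      _ ≤ B.lam * B.s k :=
          mul_le_mul (B.norm_i_le k hk) hzk (norm_nonneg z) B.lam.cast_nonneg
      _ = B.s (k + 1) := (B.s_succ k).symm
      _ ≤ B.s n := B.s_mono hkn'

lemma trunc_restr_of_mem_M {n : ℕ} {w : Linf Γ} (hw : w ∈ B.M n) :
    trunc (B.s n) (restr (B.Γs n) w) = restr (B.Γs n) w := by
  ext γ
  by_cases hγ : γ ∈ B.Γs n
  · simpa [hγ] using truncFun_of_abs_le (B.abs_apply_le_s_of_mem_M hw hγ)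
  · simp [hγ, truncFun_zero (B.s_nonneg n)]

lemma i_restr_i {k n : ℕ} (hk : 1 ≤ k) (hkn : k ≤ n) (z : Linf Γ) :
    B.i n (restr (B.Γs n) (B.i k z)) = B.i k z := by
  rcases hkn.lt_or_eq with hkn | rfl
  · exact B.compatible k n hk hkn z
  · have : restr (B.Γs k) (B.i k z) = restr (B.Γs k) z := by
      ext γ
      by_cases hγ : γ ∈ B.Γs k
      · simp [hγ, B.extension k hk z γ hγ]
      · simp [hγ]
    rw [this, B.factor k hk]

lemma norm_sub_i_restr_le {n : ℕ} (hn : 1 ≤ n) {w : Linf Γ} (hw : w ∈ B.M n) :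
    ‖w - B.i n (restr (B.Γs n) w)‖ ≤ 1 + B.lam := by
  obtain ⟨k, hk, hkn, z, -, rfl⟩ := B.exists_eq_quant_i_of_mem_M hw
  have hdecomp : quant (B.i k z) - B.i n (restr (B.Γs n) (quant (B.i k z))) =
      (quant (B.i k z) - B.i k z) -
        B.i n (quant (restr (B.Γs n) (B.i k z)) - restr (B.Γs n) (B.i k z)) := by
    rw [restr_quant, map_sub, B.i_restr_i hk hkn]; abel
  rw [hdecomp]
  calc _ ≤ ‖quant (B.i k z) - B.i k z‖ +
        ‖B.i n‖ * ‖quant (restr (B.Γs n) (B.i k z)) - restr (B.Γs n) (B.i k z)‖ :=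
        (norm_sub_le _ _).trans (add_le_add le_rfl ((B.i n).le_opNorm _))
    _ ≤ 1 + B.lam * 1 :=
        add_le_add (norm_quant_sub_le _)
          (mul_le_mul (B.norm_i_le n hn) (norm_quant_sub_le _) (norm_nonneg _) B.lam.cast_nonneg)
    _ = 1 + B.lam := by rw [mul_one]

lemma injOn_restr_M (n : ℕ) : InjOn (restr (B.Γs n)) (B.M n) := by
  induction n with
  | zero => simp [M]
  | succ n ih =>
    have hold : InjOn (restr (B.Γs (n + 1))) (B.M n) := by
      rcases n.eq_zero_or_pos with rfl | hn
      · simp [M]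
      · refine InjOn.of_comp (g := restr (B.Γs n)) fun w hw w' hw' h => ih hw hw' ?_
        simpa [Function.comp_def, restr_restr_of_subset (B.ssubset n hn).subset] using h
    have hnew {z : Linf Γ} (hz : z ∈ quant '' suppBall (B.Γs (n + 1)) (B.s (n + 1))) :
        restr (B.Γs (n + 1)) (quant (B.i (n + 1) z)) = z :=
      B.restr_quant_i n.succ_pos hz
    rintro w (hw | ⟨z, ⟨hz, hzold⟩, rfl⟩) w' (hw' | ⟨z', ⟨hz', hzold'⟩, rfl⟩) h
    · exact hold hw hw' h
    · exact absurd ⟨w, hw, h.trans (hnew hz')⟩ hzold'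
    · exact absurd ⟨w', hw', h.symm.trans (hnew hz)⟩ hzold
    · rw [← hnew hz, h, hnew hz']

lemma surjOn_restr_M {n : ℕ} (hn : 1 ≤ n) :
    SurjOn (restr (B.Γs n)) (B.M n) (quant '' suppBall (B.Γs n) (B.s n)) := by
  obtain ⟨m, rfl⟩ : ∃ m, n = m + 1 := ⟨n - 1, by omega⟩
  intro z hz
  by_cases hold : z ∈ restr (B.Γs (m + 1)) '' B.M m
  · obtain ⟨w, hw, rfl⟩ := hold
    exact ⟨w, Or.inl hw, rfl⟩
  · exact ⟨_, Or.inr ⟨z, ⟨hz, hold⟩, rfl⟩, B.restr_quant_i hn hz⟩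

lemma norm_sub_le_of_mem_M {n : ℕ} (hn : 1 ≤ n) {u v : Linf Γ} (hu : u ∈ B.M n)
    (hv : v ∈ B.M n) :
    ‖u - v‖ ≤ (3 * B.lam + 2) * ‖restr (B.Γs n) u - restr (B.Γs n) v‖ := by
  set d := ‖restr (B.Γs n) u - restr (B.Γs n) v‖
  by_cases huv : restr (B.Γs n) u = restr (B.Γs n) v
  · rw [B.injOn_restr_M n hu hv huv, sub_self, norm_zero]
    positivity
  have hd : 1 ≤ d :=
    one_le_norm_sub_of_intValued ((B.intValued_of_mem_Mtot (B.mem_Mtot hu)).restr _)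
      ((B.intValued_of_mem_Mtot (B.mem_Mtot hv)).restr _) huv
  have hdecomp : u - v = (u - B.i n (restr (B.Γs n) u)) - (v - B.i n (restr (B.Γs n) v)) +
      B.i n (restr (B.Γs n) u - restr (B.Γs n) v) := by
    rw [map_sub]; abel
  have hi : ‖B.i n (restr (B.Γs n) u - restr (B.Γs n) v)‖ ≤ B.lam * d :=
    ((B.i n).le_opNorm _).trans (mul_le_mul_of_nonneg_right (B.norm_i_le n hn) (norm_nonneg _))
  calc ‖u - v‖ ≤ (1 + B.lam) + (1 + B.lam) + B.lam * d := by
        rw [hdecomp]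
        exact (norm_add_le _ _).trans (add_le_add ((norm_sub_le _ _).trans (add_le_add
          (B.norm_sub_i_restr_le hn hu) (B.norm_sub_i_restr_le hn hv))) hi)
    _ ≤ (3 * B.lam + 2) * d := by nlinarith [B.one_le_lam_real]

def phi (n : ℕ) (x : Linf Γ) : Linf Γ :=
  Function.invFunOn (restr (B.Γs n)) (B.M n) (trunc (B.s n) (restr (B.Γs n) x))

lemma trunc_restr_mem_quant_image_suppBall {n : ℕ} {x : Linf Γ} (hx : IntValued x) :
    trunc (B.s n) (restr (B.Γs n) x) ∈ quant '' suppBall (B.Γs n) (B.s n) := by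
  refine mem_quant_image_suppBall.2 ⟨?_, fun γ hγ => ?_, norm_trunc_le (B.s_nonneg n) _⟩
  · rw [s_eq_natCast]
    exact (hx.restr _).trunc _
  · simp [hγ, truncFun_zero (B.s_nonneg n)]

lemma phi_mem_M_and_restr_phi {n : ℕ} (hn : 1 ≤ n) {x : Linf Γ} (hx : x ∈ B.Mtot) :
    B.phi n x ∈ B.M n ∧ restr (B.Γs n) (B.phi n x) = trunc (B.s n) (restr (B.Γs n) x) :=
  have h := B.surjOn_restr_M hn
    (B.trunc_restr_mem_quant_image_suppBall (B.intValued_of_mem_Mtot hx))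
  ⟨Function.invFunOn_mem h, Function.invFunOn_eq h⟩

lemma phi_eq_self {n : ℕ} {x : Linf Γ} (hx : x ∈ B.M n) : B.phi n x = x := by
  rw [phi, B.trunc_restr_of_mem_M hx]
  exact (B.injOn_restr_M n).leftInvOn_invFunOn hx

lemma trunc_restr_phi {m n : ℕ} (hm : 1 ≤ m) (hn : 1 ≤ n) (hnm : n ≤ m) {x : Linf Γ}
    (hx : x ∈ B.Mtot) :
    trunc (B.s n) (restr (B.Γs n) (B.phi m x)) = trunc (B.s n) (restr (B.Γs n) x) := by
  rw [← restr_restr_of_subset (B.Γs_mono hn hnm), (B.phi_mem_M_and_restr_phi hm hx).2,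
    restr_trunc (B.s_nonneg m), trunc_trunc (B.s_nonneg n) (B.s_mono hnm),
    restr_restr_of_subset (B.Γs_mono hn hnm)]

lemma phi_phi {m n : ℕ} (hm : 1 ≤ m) (hn : 1 ≤ n) {x : Linf Γ} (hx : x ∈ B.Mtot) :
    B.phi n (B.phi m x) = B.phi (min m n) x := by
  rcases le_total m n with hmn | hnm
  · rw [min_eq_left hmn]
    exact B.phi_eq_self (B.M_mono hmn (B.phi_mem_M_and_restr_phi hm hx).1)
  · rw [min_eq_right hnm]
    exact congrArg (Function.invFunOn _ (B.M n)) (B.trunc_restr_phi hm hn hnm hx)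

lemma norm_phi_sub_phi_le {n : ℕ} (hn : 1 ≤ n) {x y : Linf Γ} (hx : x ∈ B.Mtot)
    (hy : y ∈ B.Mtot) : ‖B.phi n x - B.phi n y‖ ≤ (3 * B.lam + 2) * ‖x - y‖ := by
  obtain ⟨hxM, hxr⟩ := B.phi_mem_M_and_restr_phi hn hx
  obtain ⟨hyM, hyr⟩ := B.phi_mem_M_and_restr_phi hn hy
  refine (B.norm_sub_le_of_mem_M hn hxM hyM).trans (mul_le_mul_of_nonneg_left ?_ (by positivity))
  rw [hxr, hyr]
  exact (norm_trunc_sub_trunc_le (B.s_nonneg n) _ _).trans (norm_restr_sub_restr_le _ x y)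

end BD

/-- Proposition 4 (`globaldef`): the maps `φ_n = (r_n|_{M_n})⁻¹ ∘ T_{s_n} ∘ r_n`
are well-defined retractions of `M` onto `M_n` with `φ_n ∘ φ_m = φ_{min(m,n)}`,
and every `φ_n` is `(3λ+2)`-Lipschitz.  The defining formula is encoded by
`φ n x ∈ M_n` together with `r_n(φ n x) = T_{s_n}(r_n x)` (which determines
`φ n x` uniquely, `r_n` being injective on `M_n`). -/
theorem phi_retractions (B : BD Γ) :
    ∃ φ : ℕ → Linf Γ → Linf Γ,
      (∀ n, 1 ≤ n → ∀ x ∈ B.Mtot, φ n x ∈ B.M n ∧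
        restr (B.Γs n) (φ n x) = trunc (B.s n) (restr (B.Γs n) x)) ∧
      (∀ n, 1 ≤ n → ∀ x ∈ B.M n, φ n x = x) ∧
      (∀ m n, 1 ≤ m → 1 ≤ n → ∀ x ∈ B.Mtot, φ n (φ m x) = φ (min m n) x) ∧
      (∀ n, 1 ≤ n → ∀ x ∈ B.Mtot, ∀ y ∈ B.Mtot,
        ‖φ n x - φ n y‖ ≤ (3 * (B.lam : ℝ) + 2) * ‖x - y‖) :=
  ⟨B.phi, fun _ hn _ hx => B.phi_mem_M_and_restr_phi hn hx,
    fun _ _ _ hx => B.phi_eq_self hx, fun _ _ hm hn _ hx => B.phi_phi hm hn hx,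
    fun _ hn _ hx _ hy => B.norm_phi_sub_phi_le hn hx hy⟩
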